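/- arXiv:1009.3629 — 4 statements merged into one kernel-verified Lean document; each statement's English description precedes it below -/
import Mathlib

section
/- Let (Ω, P) be a probability space and n ∈ ℕ. Let u₁,…,uₙ ∈ L¹(Ω) and set Zₖ = u₁ + ⋯ + uₖ. Let v₁,…,vₙ and w₁,…,wₙ be nonnegative functions in L¹(Ω) such that E[(|Z_{k−1}|² + vₖ²)^{1/2}] + E[wₖ] ≤ E[|Zₖ|] for all 1 ≤ k ≤ n. Then E[(∑_{k=1}^n vₖ²)^{1/2}] + ∑_{k=1}^n E[wₖ] ≤ 2 (E[|Zₙ|])^{1/2} (E[max_{k≤n} |Zₖ|])^{1/2}. -/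
/-!
Write `M = max_{k ≤ n} |Z_k|`, `T = (∑ v_k²)^{1/2}` and `D = (M² + T²)^{1/2} + M`. For `a ≤ M`,
`b ≤ T` one has `b² / D ≤ (a² + b²)^{1/2} - a`, so the hypothesis at step `k` gives
`E[v_k² / D] ≤ E|Z_k| - E|Z_{k-1}| - E w_k`, and telescoping gives
`E[T² / D] ≤ A := E|Z_n| - ∑ E w_k`. Since `(M² + T²)^{1/2} = M + T² / D`, also
`E[D] ≤ 2 E[M] + A`, and Cauchy–Schwarz yields `E[T] ≤ (A (2 E[M] + A))^{1/2}`, which is at most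
`2 (E|Z_n| E[M])^{1/2} - ∑ E w_k` because `0 ≤ ∑ E w_k ≤ E|Z_n| ≤ E[M]`.
-/

open MeasureTheory Finset

theorem Finset.sum_Icc_one_sub_pred {G : Type*} [AddCommGroup G] (F : ℕ → G) (n : ℕ) :
    ∑ k ∈ Icc 1 n, (F k - F (k - 1)) = F n - F 0 := by
  rw [← Finset.Ico_add_one_right_eq_Icc, Finset.sum_Ico_eq_sum_range, Nat.add_sub_cancel]
  simp only [add_comm 1, Nat.add_sub_cancel]
  exact Finset.sum_range_sub F n

namespace Real

theorem sqrt_sq_add_sq_sub_eq {a : ℝ} (b : ℝ) (ha : 0 ≤ a) :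
    √(a ^ 2 + b ^ 2) - a = b ^ 2 / (√(a ^ 2 + b ^ 2) + a) := by
  have hc : √(a ^ 2 + b ^ 2) ^ 2 = a ^ 2 + b ^ 2 := sq_sqrt (by positivity)
  rcases (add_nonneg (sqrt_nonneg (a ^ 2 + b ^ 2)) ha).eq_or_lt with h0 | h0
  · have ha0 : a = 0 := by nlinarith [sqrt_nonneg (a ^ 2 + b ^ 2)]
    have hb0 : b = 0 := by nlinarith
    simp [ha0, hb0]
  · rw [eq_div_iff h0.ne']
    nlinarith

theorem sq_div_le_sqrt_sq_add_sq_sub {a b D : ℝ} (ha : 0 ≤ a)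
    (hD : √(a ^ 2 + b ^ 2) + a ≤ D) : b ^ 2 / D ≤ √(a ^ 2 + b ^ 2) - a := by
  rw [sqrt_sq_add_sq_sub_eq b ha]
  rcases eq_or_ne b 0 with rfl | hb
  · simp
  · have : 0 < √(a ^ 2 + b ^ 2) := sqrt_pos.2 (by positivity)
    exact div_le_div_of_nonneg_left (sq_nonneg b) (by positivity) hD

theorem le_sqrt_sq_add_sq_add {a : ℝ} (b : ℝ) (ha : 0 ≤ a) : b ≤ √(a ^ 2 + b ^ 2) + a :=
  (le_sqrt_of_sq_le (le_add_of_nonneg_left (sq_nonneg a))).trans (le_add_of_nonneg_right ha)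

theorem sqrt_sq_add_sq_le_abs_add_abs (a b : ℝ) : √(a ^ 2 + b ^ 2) ≤ |a| + |b| :=
  sqrt_le_iff.2 ⟨by positivity, by nlinarith [abs_nonneg a, abs_nonneg b, sq_abs a, sq_abs b]⟩

theorem sqrt_sum_sq_le_sum_abs {ι : Type*} (s : Finset ι) (f : ι → ℝ) :
    √(∑ i ∈ s, f i ^ 2) ≤ ∑ i ∈ s, |f i| := by
  refine sqrt_le_iff.2 ⟨sum_nonneg fun i _ => abs_nonneg (f i), ?_⟩
  simpa only [sq_abs] using sum_sq_le_sq_sum_of_nonneg (s := s) fun i _ => abs_nonneg (f i)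

theorem sq_le_sq_div_mul {T D : ℝ} (hT : 0 ≤ T) (hTD : T ≤ D) : T ^ 2 ≤ T ^ 2 / D * D := by
  rcases (hT.trans hTD).eq_or_lt with rfl | hD
  · simp [le_antisymm hTD hT]
  · rw [div_mul_cancel₀ _ hD.ne']

theorem sqrt_sub_mul_sqrt_add_le {W L m : ℝ} (hW : 0 ≤ W) (hWL : W ≤ L) (hLm : L ≤ m) :
    √(L - W) * √(2 * m + (L - W)) + W ≤ 2 * √L * √m := by
  have hL := sq_sqrt (hW.trans hWL)
  have hm := sq_sqrt (hW.trans (hWL.trans hLm))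
  have hst : √L ≤ √m := sqrt_le_sqrt hLm
  have hW' : W ≤ √L * √m := by nlinarith [sqrt_nonneg L]
  rw [← sqrt_mul (sub_nonneg.2 hWL), ← le_sub_iff_add_le, sqrt_le_left (by linarith)]
  nlinarith [mul_nonneg hW (sq_nonneg (√L - √m)), mul_nonneg (sq_nonneg (√L)) (sub_nonneg.2 hst),
    mul_nonneg (mul_nonneg (sqrt_nonneg L) (sqrt_nonneg m)) (sub_nonneg.2 hst)]

end Real

section Integral

variable {Ω : Type*} [MeasurableSpace Ω] {μ : Measure Ω}

theorem Finset.integrable_sup' {ι : Type*} {s : Finset ι} (hs : s.Nonempty) {f : ι → Ω → ℝ}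
    (hf : ∀ i ∈ s, Integrable (f i) μ) : Integrable (fun ω => s.sup' hs fun i => f i ω) μ := by
  simpa only [← Finset.sup'_apply] using
    Finset.sup'_induction hs f (p := fun φ : Ω → ℝ => Integrable φ μ)
      (fun _ hφ _ hψ => hφ.sup hψ) hf

theorem integrable_sqrt_sq_add_sq {a b : Ω → ℝ} (ha : Integrable a μ) (hb : Integrable b μ) :
    Integrable (fun ω => √(a ω ^ 2 + b ω ^ 2)) μ :=
  (ha.abs.add hb.abs).mono' ((ha.1.aemeasurable.pow_const 2).add
      (hb.1.aemeasurable.pow_const 2)).sqrt.aestronglyMeasurable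
    (.of_forall fun ω => by
      rw [Real.norm_of_nonneg (Real.sqrt_nonneg _)]
      exact Real.sqrt_sq_add_sq_le_abs_add_abs (a ω) (b ω))

theorem integrable_sqrt_sum_sq {ι : Type*} {s : Finset ι} {f : ι → Ω → ℝ}
    (hf : ∀ i ∈ s, Integrable (f i) μ) : Integrable (fun ω => √(∑ i ∈ s, f i ω ^ 2)) μ :=
  (integrable_finsetSum s fun i hi => (hf i hi).abs).mono'
    (Finset.aemeasurable_fun_sum s fun i hi =>
      (hf i hi).1.aemeasurable.pow_const 2).sqrt.aestronglyMeasurable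
    (.of_forall fun ω => by
      rw [Real.norm_of_nonneg (Real.sqrt_nonneg _)]
      exact Real.sqrt_sum_sq_le_sum_abs s fun i => f i ω)

theorem integrable_sq_div {b D : Ω → ℝ} (hb : Integrable b μ) (hb0 : 0 ≤ b) (hbD : b ≤ D)
    (hD : AEStronglyMeasurable D μ) : Integrable (fun ω => b ω ^ 2 / D ω) μ :=
  hb.mono' ((hb.1.aemeasurable.pow_const 2).div hD.aemeasurable).aestronglyMeasurable
    (.of_forall fun ω => by
      have hD0 := (hb0 ω).trans (hbD ω)
      rw [Real.norm_of_nonneg (div_nonneg (sq_nonneg _) hD0)]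
      exact div_le_of_le_mul₀ hD0 (hb0 ω)
        (sq (b ω) ▸ mul_le_mul_of_nonneg_left (hbD ω) (hb0 ω)))

theorem integral_le_sqrt_mul_sqrt_of_sq_le_mul {f g h : Ω → ℝ} (hf : Integrable f μ)
    (hg : Integrable g μ) (hf0 : 0 ≤ f) (hg0 : 0 ≤ g) (hh0 : 0 ≤ h)
    (hfgh : ∀ ω, h ω ^ 2 ≤ f ω * g ω) :
    ∫ ω, h ω ∂μ ≤ √(∫ ω, f ω ∂μ) * √(∫ ω, g ω ∂μ) := by
  have memLp_sqrt : ∀ {φ : Ω → ℝ}, Integrable φ μ → 0 ≤ φ → MemLp (fun ω => √(φ ω)) 2 μ :=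
    fun hφ hφ0 => by
      rw [memLp_two_iff_integrable_sq hφ.1.aemeasurable.sqrt.aestronglyMeasurable]
      exact hφ.congr (.of_forall fun ω => (Real.sq_sqrt (hφ0 ω)).symm)
  have rpow_sqrt : ∀ {φ : Ω → ℝ}, 0 ≤ φ →
      (∫ ω, √(φ ω) ^ (2 : ℝ) ∂μ) ^ (1 / 2 : ℝ) = √(∫ ω, φ ω ∂μ) := fun hφ0 => by
    simp_rw [Real.rpow_two, Real.sq_sqrt (hφ0 _), ← Real.sqrt_eq_rpow]
  calc ∫ ω, h ω ∂μ ≤ ∫ ω, √(f ω) * √(g ω) ∂μ :=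
        integral_mono_of_nonneg (.of_forall hh0)
          ((memLp_sqrt hf hf0).integrable_mul (memLp_sqrt hg hg0) (p := 2) (q := 2))
          (.of_forall fun ω =>
            (Real.le_sqrt_of_sq_le (hfgh ω)).trans_eq (Real.sqrt_mul (hf0 ω) _))
    _ ≤ _ := by
        have := integral_mul_le_Lp_mul_Lq_of_nonneg Real.HolderConjugate.two_two
          (.of_forall fun ω => Real.sqrt_nonneg (f ω)) (.of_forall fun ω => Real.sqrt_nonneg (g ω))
          (by simpa using memLp_sqrt hf hf0) (by simpa using memLp_sqrt hg hg0) (μ := μ)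
        rwa [rpow_sqrt hf0, rpow_sqrt hg0] at this

theorem integral_sq_div_le_of_integral_sqrt_add_le {a b c w D : Ω → ℝ} (ha : Integrable a μ)
    (ha0 : 0 ≤ a) (hb : Integrable b μ) (hb0 : 0 ≤ b) (hD : AEStronglyMeasurable D μ)
    (habD : ∀ ω, √(a ω ^ 2 + b ω ^ 2) + a ω ≤ D ω)
    (h : ∫ ω, √(a ω ^ 2 + b ω ^ 2) ∂μ + ∫ ω, w ω ∂μ ≤ ∫ ω, c ω ∂μ) :
    ∫ ω, b ω ^ 2 / D ω ∂μ ≤ ∫ ω, c ω ∂μ - ∫ ω, a ω ∂μ - ∫ ω, w ω ∂μ := by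
  have hbD : b ≤ D := fun ω => (Real.le_sqrt_sq_add_sq_add (b ω) (ha0 ω)).trans (habD ω)
  have hs := integrable_sqrt_sq_add_sq ha hb
  have : ∫ ω, b ω ^ 2 / D ω ∂μ ≤ ∫ ω, (√(a ω ^ 2 + b ω ^ 2) - a ω) ∂μ :=
    integral_mono (integrable_sq_div hb hb0 hbD hD) (hs.sub ha)
      fun ω => Real.sq_div_le_sqrt_sq_add_sq_sub (ha0 ω) (habD ω)
  rw [integral_sub hs ha] at this
  linarith

theorem integral_sum_sq_div_le {n : ℕ} {X v w : ℕ → Ω → ℝ} {D : Ω → ℝ}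
    (hX : ∀ k ≤ n, Integrable (X k) μ) (hX0 : ∀ k, 0 ≤ X k)
    (hv : ∀ k ∈ Icc 1 n, Integrable (v k) μ) (hv0 : ∀ k ∈ Icc 1 n, ∀ ω, 0 ≤ v k ω)
    (hD : AEStronglyMeasurable D μ)
    (hXvD : ∀ k ∈ Icc 1 n, ∀ ω, √(X (k - 1) ω ^ 2 + v k ω ^ 2) + X (k - 1) ω ≤ D ω)
    (hyp : ∀ k ∈ Icc 1 n,
      ∫ ω, √(X (k - 1) ω ^ 2 + v k ω ^ 2) ∂μ + ∫ ω, w k ω ∂μ ≤ ∫ ω, X k ω ∂μ) :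
    ∫ ω, (∑ k ∈ Icc 1 n, v k ω ^ 2) / D ω ∂μ ≤ ∫ ω, X n ω ∂μ - ∑ k ∈ Icc 1 n, ∫ ω, w k ω ∂μ := by
  have hstep : ∀ k ∈ Icc 1 n, ∫ ω, v k ω ^ 2 / D ω ∂μ
      ≤ (∫ ω, X k ω ∂μ - ∫ ω, X (k - 1) ω ∂μ) - ∫ ω, w k ω ∂μ := fun k hk => by
    have hkn := (mem_Icc.1 hk).2
    exact integral_sq_div_le_of_integral_sqrt_add_le (hX (k - 1) (by omega)) (hX0 (k - 1))
      (hv k hk) (hv0 k hk) hD (hXvD k hk) (hyp k hk)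
  calc ∫ ω, (∑ k ∈ Icc 1 n, v k ω ^ 2) / D ω ∂μ = ∑ k ∈ Icc 1 n, ∫ ω, v k ω ^ 2 / D ω ∂μ := by
        simp_rw [sum_div]
        refine integral_finsetSum _ fun k hk => integrable_sq_div (hv k hk) (hv0 k hk)
          (fun ω => (Real.le_sqrt_sq_add_sq_add _ (hX0 _ ω)).trans (hXvD k hk ω)) hD
    _ ≤ ∑ k ∈ Icc 1 n, ((∫ ω, X k ω ∂μ - ∫ ω, X (k - 1) ω ∂μ) - ∫ ω, w k ω ∂μ) :=
        sum_le_sum hstep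
    _ = ∫ ω, X n ω ∂μ - ∫ ω, X 0 ω ∂μ - ∑ k ∈ Icc 1 n, ∫ ω, w k ω ∂μ := by
        rw [sum_sub_distrib, sum_Icc_one_sub_pred fun k => ∫ ω, X k ω ∂μ]
    _ ≤ ∫ ω, X n ω ∂μ - ∑ k ∈ Icc 1 n, ∫ ω, w k ω ∂μ := by
        linarith [integral_nonneg (μ := μ) (hX0 0)]

theorem integral_le_sqrt_mul_sqrt_of_integral_sq_div_le {M T : Ω → ℝ} {A : ℝ}
    (hM : Integrable M μ) (hM0 : 0 ≤ M) (hT : Integrable T μ) (hT0 : 0 ≤ T)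
    (hA : ∫ ω, T ω ^ 2 / (√(M ω ^ 2 + T ω ^ 2) + M ω) ∂μ ≤ A) :
    ∫ ω, T ω ∂μ ≤ √A * √(2 * ∫ ω, M ω ∂μ + A) := by
  set D : Ω → ℝ := fun ω => √(M ω ^ 2 + T ω ^ 2) + M ω
  have hD : Integrable D μ := (integrable_sqrt_sq_add_sq hM hT).add hM
  have hTD : T ≤ D := fun ω => Real.le_sqrt_sq_add_sq_add (T ω) (hM0 ω)
  have hQ := integrable_sq_div hT hT0 hTD hD.1
  have hD_eq : ∫ ω, D ω ∂μ = 2 * ∫ ω, M ω ∂μ + ∫ ω, T ω ^ 2 / D ω ∂μ := by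
    rw [← integral_const_mul, ← integral_add (hM.const_mul 2) hQ]
    refine integral_congr_ae (.of_forall fun ω => ?_)
    have := Real.sqrt_sq_add_sq_sub_eq (T ω) (hM0 ω)
    simp only [D] at this ⊢
    linarith
  calc ∫ ω, T ω ∂μ ≤ √(∫ ω, T ω ^ 2 / D ω ∂μ) * √(∫ ω, D ω ∂μ) :=
        integral_le_sqrt_mul_sqrt_of_sq_le_mul hQ hD
          (fun ω => div_nonneg (sq_nonneg _) ((hT0 ω).trans (hTD ω))) (hT0.trans hTD) hT0
          fun ω => Real.sq_le_sq_div_mul (hT0 ω) (hTD ω)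
    _ ≤ √A * √(2 * ∫ ω, M ω ∂μ + A) := by
        rw [hD_eq]
        gcongr

theorem integral_sqrt_sum_sq_add_sum_integral_le {n : ℕ} {X v w : ℕ → Ω → ℝ}
    (hX : ∀ k ≤ n, Integrable (X k) μ) (hX0 : ∀ k, 0 ≤ X k)
    (hv : ∀ k ∈ Icc 1 n, Integrable (v k) μ) (hv0 : ∀ k ∈ Icc 1 n, ∀ ω, 0 ≤ v k ω)
    (hw0 : ∀ k ∈ Icc 1 n, ∀ ω, 0 ≤ w k ω)
    (hyp : ∀ k ∈ Icc 1 n,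
      ∫ ω, √(X (k - 1) ω ^ 2 + v k ω ^ 2) ∂μ + ∫ ω, w k ω ∂μ ≤ ∫ ω, X k ω ∂μ) :
    ∫ ω, √(∑ k ∈ Icc 1 n, v k ω ^ 2) ∂μ + ∑ k ∈ Icc 1 n, ∫ ω, w k ω ∂μ
      ≤ 2 * √(∫ ω, X n ω ∂μ)
        * √(∫ ω, (range (n + 1)).sup' nonempty_range_add_one (fun k => X k ω) ∂μ) := by
  set M : Ω → ℝ := fun ω => (range (n + 1)).sup' nonempty_range_add_one fun k => X k ω
  set T : Ω → ℝ := fun ω => √(∑ k ∈ Icc 1 n, v k ω ^ 2)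
  set W := ∑ k ∈ Icc 1 n, ∫ ω, w k ω ∂μ
  have hXM : ∀ k ≤ n, X k ≤ M := fun k hk ω =>
    le_sup' (fun k => X k ω) (mem_range.2 (Nat.lt_succ_of_le hk))
  have hM : Integrable M μ :=
    integrable_sup' _ fun k hk => hX k (Nat.lt_succ_iff.1 (mem_range.1 hk))
  have hM0 : 0 ≤ M := (hX0 0).trans (hXM 0 n.zero_le)
  have hT : Integrable T μ := integrable_sqrt_sum_sq hv
  have hT0 : 0 ≤ T := fun ω => Real.sqrt_nonneg _
  have hT_sq : ∀ ω, T ω ^ 2 = ∑ k ∈ Icc 1 n, v k ω ^ 2 := fun ω =>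
    Real.sq_sqrt (sum_nonneg fun k _ => sq_nonneg (v k ω))
  have hvT : ∀ k ∈ Icc 1 n, ∀ ω, v k ω ≤ T ω := fun k hk ω =>
    Real.le_sqrt_of_sq_le (single_le_sum (f := fun k => v k ω ^ 2) (fun k _ => sq_nonneg _) hk)
  have hA : ∫ ω, T ω ^ 2 / (√(M ω ^ 2 + T ω ^ 2) + M ω) ∂μ ≤ ∫ ω, X n ω ∂μ - W := by
    refine (integral_congr_ae (.of_forall fun ω => ?_)).trans_le (integral_sum_sq_div_le
      (D := fun ω => √(M ω ^ 2 + T ω ^ 2) + M ω) hX hX0 hv hv0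
      ((integrable_sqrt_sq_add_sq hM hT).add hM).1 (fun k hk ω => ?_) hyp)
    · exact congrArg (· / _) (hT_sq ω)
    · have hXkM := hXM (k - 1) (by have := (mem_Icc.1 hk).2; omega) ω
      gcongr
      exacts [hX0 _ ω, hv0 k hk ω, hvT k hk ω]
  have hA0 : 0 ≤ ∫ ω, T ω ^ 2 / (√(M ω ^ 2 + T ω ^ 2) + M ω) ∂μ :=
    integral_nonneg fun ω =>
      div_nonneg (sq_nonneg (T ω)) (add_nonneg (Real.sqrt_nonneg _) (hM0 ω))
  have hW0 : 0 ≤ W := sum_nonneg fun k hk => integral_nonneg (hw0 k hk)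
  calc ∫ ω, T ω ∂μ + W
      ≤ √(∫ ω, X n ω ∂μ - W) * √(2 * ∫ ω, M ω ∂μ + (∫ ω, X n ω ∂μ - W)) + W := by
        gcongr
        exact integral_le_sqrt_mul_sqrt_of_integral_sq_div_le hM hM0 hT hT0 hA
    _ ≤ 2 * √(∫ ω, X n ω ∂μ) * √(∫ ω, M ω ∂μ) :=
        Real.sqrt_sub_mul_sqrt_add_le hW0 (by linarith)
          (integral_mono (hX n le_rfl) hM (hXM n le_rfl))

end Integral

theorem stmt_1 {Ω : Type*} [MeasurableSpace Ω] (μ : Measure Ω)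
    (n : ℕ) (u : ℕ → Ω → ℂ) (v w : ℕ → Ω → ℝ)
    (hu : ∀ k ∈ Finset.Icc 1 n, Integrable (u k) μ)
    (hv : ∀ k ∈ Finset.Icc 1 n, Integrable (v k) μ)
    (hv0 : ∀ k ∈ Finset.Icc 1 n, ∀ ω, 0 ≤ v k ω)
    (hw0 : ∀ k ∈ Finset.Icc 1 n, ∀ ω, 0 ≤ w k ω)
    (Z : ℕ → Ω → ℂ) (hZ : ∀ k, ∀ ω, Z k ω = ∑ m ∈ Finset.Icc 1 k, u m ω)
    (hyp : ∀ k ∈ Finset.Icc 1 n,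
      (∫ ω, Real.sqrt (‖Z (k - 1) ω‖ ^ 2 + v k ω ^ 2) ∂μ) + ∫ ω, w k ω ∂μ
        ≤ ∫ ω, ‖Z k ω‖ ∂μ) :
    (∫ ω, Real.sqrt (∑ k ∈ Finset.Icc 1 n, v k ω ^ 2) ∂μ)
      + ∑ k ∈ Finset.Icc 1 n, ∫ ω, w k ω ∂μ
      ≤ 2 * Real.sqrt (∫ ω, ‖Z n ω‖ ∂μ)
          * Real.sqrt (∫ ω, (Finset.range (n + 1)).sup' (by simp) (fun k => ‖Z k ω‖) ∂μ) := by
  have hZ_int : ∀ k ≤ n, Integrable (fun ω => ‖Z k ω‖) μ := fun k hk => by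
    simp_rw [hZ]
    exact (integrable_finsetSum _ fun m hm => hu m (Icc_subset_Icc_right hk hm)).norm
  exact integral_sqrt_sum_sq_add_sum_integral_le hZ_int (fun k ω => norm_nonneg _) hv hv0 hw0 hyp
end

section
/- Let (Ω, P) be a probability space, h ∈ L¹(Ω) with E[h] = 0, and M > 0. Define D = {|h| ≤ 2M} and g = 1_D h − E[1_D h]. Then |g| ≤ 4M almost surely, E[g] = 0, and (M² + (1/12) E[|g|²])^{1/2} + (1/4) E[|h − g|] ≤ E[(M² + |h|²)^{1/2}]. -/
/-!
Write `Y = 1_D h`. Centring only lowers the second moment, `E|g|² ≤ E|Y|²`, and since `E h = 0`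
the shift `E Y = -E[h - Y]` is controlled by the tail, so `E|h - g| ≤ 2 E|h - Y|`. Linearising
the square root, `√(M² + T) ≤ M + T/(2M)`, reduces the inequality to the pointwise bound
`M + |Y|²/(24M) + |h - Y|/2 ≤ √(M² + |h|²)`, elementary in each of the cases `|h| ≤ 2M` and
`|h| > 2M`.
-/

open MeasureTheory

namespace Real

theorem sqrt_sq_add_le_add_div {M T : ℝ} (hM : 0 < M) (hT : 0 ≤ T) :
    √(M ^ 2 + T) ≤ M + T / (2 * M) := by
  rw [sqrt_le_left (by positivity), add_sq, mul_div_cancel₀ _ (by positivity : 2 * M ≠ 0)]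
  nlinarith [sq_nonneg (T / (2 * M))]

theorem add_sq_div_le_sqrt_sq_add_sq {M t : ℝ} (hM : 0 < M) (ht : |t| ≤ 2 * M) :
    M + t ^ 2 / (24 * M) ≤ √(M ^ 2 + t ^ 2) := by
  have ht2 : t ^ 2 ≤ 4 * M ^ 2 := by nlinarith [sq_abs t, abs_nonneg t]
  apply le_sqrt_of_sq_le
  have : M * (t ^ 2 / (24 * M)) = t ^ 2 / 24 := by field_simp
  have hq : t ^ 2 / (24 * M) ≤ M / 6 := by rw [div_le_iff₀ (by positivity)]; nlinarith
  nlinarith [div_nonneg (sq_nonneg t) (by positivity : (0 : ℝ) ≤ 24 * M)]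

theorem add_half_le_sqrt_sq_add_sq {M t : ℝ} (hM : 0 ≤ M) (ht : 4 * M ≤ 3 * t) :
    M + t / 2 ≤ √(M ^ 2 + t ^ 2) :=
  le_sqrt_of_sq_le (by nlinarith)

end Real

section Centring

variable {Ω E : Type*} [MeasurableSpace Ω] {μ : Measure Ω} [NormedAddCommGroup E]

theorem integral_sub_integral_eq_zero [NormedSpace ℝ E] [CompleteSpace E]
    [IsProbabilityMeasure μ] {X : Ω → E} (hX : Integrable X μ) :
    ∫ ω, (X ω - ∫ x, X x ∂μ) ∂μ = 0 := by
  rw [integral_sub hX (integrable_const _), integral_const, probReal_univ, one_smul, sub_self]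

theorem norm_sub_integral_le_two_mul [NormedSpace ℝ E] [IsProbabilityMeasure μ] {X : Ω → E}
    {C : ℝ} (hC : ∀ ω, ‖X ω‖ ≤ C) (ω : Ω) : ‖X ω - ∫ x, X x ∂μ‖ ≤ 2 * C := by
  have hint : ‖∫ x, X x ∂μ‖ ≤ C := by
    simpa using norm_integral_le_of_norm_le_const (μ := μ) (ae_of_all _ hC)
  linarith [norm_sub_le (X ω) (∫ x, X x ∂μ), hC ω]

theorem integral_norm_sub_integral_sq [InnerProductSpace ℝ E] [CompleteSpace E]
    [IsProbabilityMeasure μ] {X : Ω → E} (hX : MemLp X 2 μ) :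
    ∫ ω, ‖X ω - ∫ x, X x ∂μ‖ ^ 2 ∂μ = ∫ ω, ‖X ω‖ ^ 2 ∂μ - ‖∫ x, X x ∂μ‖ ^ 2 := by
  set c := ∫ x, X x ∂μ
  have hX1 : Integrable X μ := hX.integrable one_le_two
  have hX2 : Integrable (fun ω => ‖X ω‖ ^ 2) μ := hX.integrable_norm_pow two_ne_zero
  have hinner : Integrable (fun ω => 2 * inner ℝ c (X ω)) μ := (hX1.const_inner c).const_mul 2
  simp_rw [norm_sub_sq_real, real_inner_comm c]
  rw [integral_add (f := fun ω => ‖X ω‖ ^ 2 - 2 * inner ℝ c (X ω)) (hX2.sub hinner)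
    (integrable_const _), integral_sub hX2 hinner, integral_const_mul, integral_inner hX1,
    real_inner_self_eq_norm_sq, integral_const, probReal_univ, one_smul]
  ring

theorem norm_integral_le_integral_norm_sub_of_integral_eq_zero [NormedSpace ℝ E] {h Y : Ω → E}
    (hh : Integrable h μ) (hY : Integrable Y μ) (hmean : ∫ ω, h ω ∂μ = 0) :
    ‖∫ ω, Y ω ∂μ‖ ≤ ∫ ω, ‖h ω - Y ω‖ ∂μ := by
  have : ∫ ω, Y ω ∂μ = -∫ ω, (h ω - Y ω) ∂μ := by
    rw [integral_sub hh hY, hmean, zero_sub, neg_neg]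
  rw [this, norm_neg]
  exact norm_integral_le_integral_norm _

theorem integral_norm_sub_sub_integral_le [NormedSpace ℝ E] [CompleteSpace E]
    [IsProbabilityMeasure μ] {h Y : Ω → E} (hh : Integrable h μ) (hY : Integrable Y μ)
    (hmean : ∫ ω, h ω ∂μ = 0) :
    ∫ ω, ‖h ω - (Y ω - ∫ x, Y x ∂μ)‖ ∂μ ≤ 2 * ∫ ω, ‖h ω - Y ω‖ ∂μ := by
  have hdiff : Integrable (fun ω => ‖h ω - Y ω‖) μ := (hh.sub hY).norm
  calc ∫ ω, ‖h ω - (Y ω - ∫ x, Y x ∂μ)‖ ∂μ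
      ≤ ∫ ω, (‖h ω - Y ω‖ + ‖∫ x, Y x ∂μ‖) ∂μ := by
        refine integral_mono ((hh.sub (hY.sub (integrable_const _))).norm)
          (hdiff.add (integrable_const _)) fun ω => ?_
        simpa only [sub_sub_eq_add_sub, add_sub_right_comm] using norm_add_le _ _
    _ = ∫ ω, ‖h ω - Y ω‖ ∂μ + ‖∫ x, Y x ∂μ‖ := by
        rw [integral_add hdiff (integrable_const _), integral_const, probReal_univ, one_smul]
    _ ≤ 2 * ∫ ω, ‖h ω - Y ω‖ ∂μ := by
        linarith [norm_integral_le_integral_norm_sub_of_integral_eq_zero hh hY hmean]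

end Centring

section Truncation

variable {Ω E : Type*} [NormedAddCommGroup E] {h : Ω → E}

theorem norm_indicator_setOf_norm_le_le {C : ℝ} (hC : 0 ≤ C) (ω : Ω) :
    ‖{x | ‖h x‖ ≤ C}.indicator h ω‖ ≤ C := by
  by_cases hω : ω ∈ {x | ‖h x‖ ≤ C}
  · rwa [Set.indicator_of_mem hω]
  · rwa [Set.indicator_of_notMem hω, norm_zero]

theorem add_norm_indicator_sq_add_norm_sub_indicator_le_sqrt {M : ℝ} (hM : 0 < M) (ω : Ω) :
    M + ‖{x | ‖h x‖ ≤ 2 * M}.indicator h ω‖ ^ 2 / (24 * M)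
        + ‖h ω - {x | ‖h x‖ ≤ 2 * M}.indicator h ω‖ / 2 ≤ √(M ^ 2 + ‖h ω‖ ^ 2) := by
  by_cases hω : ω ∈ {x | ‖h x‖ ≤ 2 * M}
  · rw [Set.indicator_of_mem hω, sub_self, norm_zero, zero_div, add_zero]
    exact Real.add_sq_div_le_sqrt_sq_add_sq hM (by rwa [abs_norm])
  · rw [Set.indicator_of_notMem hω, sub_zero, norm_zero, zero_pow two_ne_zero, zero_div, add_zero]
    have hlt : 2 * M < ‖h ω‖ := not_le.1 hω
    exact Real.add_half_le_sqrt_sq_add_sq hM.le (by linarith)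

variable [MeasurableSpace Ω] {μ : Measure Ω}

theorem MeasureTheory.Integrable.sqrt_sq_add_norm_sq [IsFiniteMeasure μ] (hh : Integrable h μ) (M : ℝ) :
    Integrable (fun ω => √(M ^ 2 + ‖h ω‖ ^ 2)) μ := by
  refine ((integrable_const |M|).add hh.norm).mono' (by fun_prop) (ae_of_all _ fun ω => ?_)
  rw [Pi.add_apply, Real.norm_of_nonneg (Real.sqrt_nonneg _), Real.sqrt_le_left (by positivity)]
  nlinarith [norm_nonneg (h ω), abs_nonneg M, sq_abs M]

theorem add_integral_norm_indicator_sq_add_integral_norm_sub_indicator_le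
    [IsProbabilityMeasure μ] (hh : Integrable h μ) {M : ℝ} (hM : 0 < M) :
    M + (∫ ω, ‖{x | ‖h x‖ ≤ 2 * M}.indicator h ω‖ ^ 2 ∂μ) / (24 * M)
        + (∫ ω, ‖h ω - {x | ‖h x‖ ≤ 2 * M}.indicator h ω‖ ∂μ) / 2
      ≤ ∫ ω, √(M ^ 2 + ‖h ω‖ ^ 2) ∂μ := by
  set Y := {x | ‖h x‖ ≤ 2 * M}.indicator h
  have hY : Integrable Y μ :=
    hh.indicator₀ (nullMeasurableSet_le hh.1.norm.aemeasurable aemeasurable_const)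
  have hY2 : Integrable (fun ω => ‖Y ω‖ ^ 2 / (24 * M)) μ :=
    ((MemLp.of_bound hY.1 _ (ae_of_all _ (norm_indicator_setOf_norm_le_le (by positivity)))
      ).integrable_norm_pow two_ne_zero).div_const _
  have hdiff : Integrable (fun ω => ‖h ω - Y ω‖ / 2) μ := (hh.sub hY).norm.div_const _
  calc M + (∫ ω, ‖Y ω‖ ^ 2 ∂μ) / (24 * M) + (∫ ω, ‖h ω - Y ω‖ ∂μ) / 2
      = ∫ ω, (M + ‖Y ω‖ ^ 2 / (24 * M) + ‖h ω - Y ω‖ / 2) ∂μ := by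
        rw [integral_add (f := fun ω => M + ‖Y ω‖ ^ 2 / (24 * M)) ((integrable_const M).add hY2)
          hdiff, integral_add (integrable_const M) hY2, integral_const, integral_div,
          integral_div, probReal_univ, one_smul]
    _ ≤ ∫ ω, √(M ^ 2 + ‖h ω‖ ^ 2) ∂μ :=
        integral_mono (((integrable_const M).add hY2).add hdiff) (hh.sqrt_sq_add_norm_sq M)
          (add_norm_indicator_sq_add_norm_sub_indicator_le_sqrt hM)

end Truncation

theorem stmt_7 {Ω : Type*} [MeasurableSpace Ω] (μ : Measure Ω) [IsProbabilityMeasure μ]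
    (h : Ω → ℂ) (hint : Integrable h μ) (hmean : ∫ ω, h ω ∂μ = 0)
    (M : ℝ) (hM : 0 < M)
    (D : Set Ω) (hD : D = {ω | ‖h ω‖ ≤ 2 * M})
    (g : Ω → ℂ) (hg : ∀ ω, g ω = D.indicator h ω - ∫ x, D.indicator h x ∂μ) :
    (∀ᵐ ω ∂μ, ‖g ω‖ ≤ 4 * M) ∧ (∫ ω, g ω ∂μ = 0) ∧
      Real.sqrt (M ^ 2 + (1 / 12) * ∫ ω, ‖g ω‖ ^ 2 ∂μ)
          + (1 / 4) * ∫ ω, ‖h ω - g ω‖ ∂μ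
        ≤ ∫ ω, Real.sqrt (M ^ 2 + ‖h ω‖ ^ 2) ∂μ := by
  obtain rfl : g = fun ω => D.indicator h ω - ∫ x, D.indicator h x ∂μ := funext hg
  subst hD
  set Y := {ω | ‖h ω‖ ≤ 2 * M}.indicator h
  have hY_le : ∀ ω, ‖Y ω‖ ≤ 2 * M := norm_indicator_setOf_norm_le_le (by positivity)
  have hY : Integrable Y μ :=
    hint.indicator₀ (nullMeasurableSet_le hint.1.norm.aemeasurable aemeasurable_const)
  refine ⟨ae_of_all _ fun ω => ?_, integral_sub_integral_eq_zero hY, ?_⟩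
  · linarith [norm_sub_integral_le_two_mul (μ := μ) hY_le ω]
  set T := ∫ ω, ‖Y ω - ∫ x, Y x ∂μ‖ ^ 2 ∂μ
  have hsqrt := Real.sqrt_sq_add_le_add_div hM (T := 1 / 12 * T) (by positivity)
  have hTA : (1 / 12 * T) / (2 * M) ≤ (∫ ω, ‖Y ω‖ ^ 2 ∂μ) / (24 * M) :=
    calc (1 / 12 * T) / (2 * M) = T / (24 * M) := by ring
      _ ≤ _ := by
        gcongr
        exact (integral_norm_sub_integral_sq (MemLp.of_bound hY.1 _ (ae_of_all _ hY_le))).trans_le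
          (sub_le_self _ (sq_nonneg _))
  linarith [integral_norm_sub_sub_integral_le hint hY hmean,
    add_integral_norm_indicator_sq_add_integral_norm_sub_indicator_le (μ := μ) hint hM]
end

section
/- Let (Ω, (𝓕ₖ)ₖ, P) be a filtered probability space and (Fₖ)_{k=0}^n an integrable martingale with differences ΔFₖ = Fₖ − F_{k−1}. Then E[(∑_{k=1}^n (E[|ΔFₖ| | 𝓕_{k−1}])²)^{1/2}] ≤ 2 E[(∑_{k=1}^n |ΔFₖ|²)^{1/2}]. -/
/-!
Write `g k = E[d k | ℱ (k - 1)]` and `S k h = ∑_{j ≤ k} (h j)²`. The potential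
`∫ √(S k g + S k d) - 2 ∫ √(S k d)` vanishes at `k = 0` and does not increase: concavity of `√`
bounds its increment pointwise by `√(S k d + (g (k + 1))²) - √(S (k + 1) d)`, and the integral
of this is nonpositive by conditional Jensen for the modulus of `√(S k d) + i d (k + 1)`, whose
first coordinate is `ℱ k`-measurable. Hence `∫ √(S n g) ≤ ∫ √(S n g + S n d) ≤ 2 ∫ √(S n d)`.
-/

open MeasureTheory

namespace Real

theorem sqrt_add_sub_sqrt_le_of_le {a c x : ℝ} (ha : 0 ≤ a) (hac : a ≤ c) (hx : 0 ≤ x) :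
    √(c + x) - √c ≤ √(a + x) - √a := by
  have hcross : √((c + x) * a) ≤ √((a + x) * c) := sqrt_le_sqrt (by nlinarith)
  rw [sqrt_mul (by linarith), sqrt_mul (by linarith)] at hcross
  suffices √(c + x) + √a ≤ √(a + x) + √c by linarith
  rw [← pow_le_pow_iff_left₀ (by positivity) (by positivity) two_ne_zero]
  nlinarith [sq_sqrt (show 0 ≤ c + x by linarith), sq_sqrt ha, sq_sqrt (show 0 ≤ a + x by linarith),
    sq_sqrt (show 0 ≤ c by linarith)]

theorem sqrt_add_add_add_two_mul_sqrt_le {b s x y : ℝ} (hb : 0 ≤ b) (hbs : b ≤ s) (hx : 0 ≤ x)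
    (hy : 0 ≤ y) : √(s + x + y) + 2 * √b ≤ √s + √(b + x) + √(b + y) := by
  have h₁ := sqrt_add_sub_sqrt_le_of_le (hb.trans hbs) (le_add_of_nonneg_right hy) hx
  have h₂ := sqrt_add_sub_sqrt_le_of_le hb hbs hx
  have h₃ := sqrt_add_sub_sqrt_le_of_le hb hbs hy
  rw [add_right_comm] at h₁
  linarith

end Real

section

variable {Ω : Type*} {m m0 : MeasurableSpace Ω} {μ : Measure Ω}

theorem integral_sqrt_sq_add_sq_condExp_le (hm : m ≤ m0) [SigmaFinite (μ.trim hm)] {a d : Ω → ℝ}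
    (ha : StronglyMeasurable[m] a) (hai : Integrable a μ) (hd : Integrable d μ) :
    ∫ ω, √(a ω ^ 2 + μ[d | m] ω ^ 2) ∂μ ≤ ∫ ω, √(a ω ^ 2 + d ω ^ 2) ∂μ := by
  have norm_eq (x y : ℝ) : ‖(x : ℂ) + y * Complex.I‖ = √(x ^ 2 + y ^ 2) := by
    simp [Complex.norm_eq_sqrt_sq_add_sq]
  let T : ℝ →L[ℝ] ℂ := Complex.ofRealCLM
  let U : ℝ →L[ℝ] ℂ := Complex.I • Complex.ofRealCLM
  have hf : (fun ω => (a ω : ℂ) + d ω * Complex.I) = T ∘ a + U ∘ d := by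
    ext1 ω; simp [T, U, mul_comm]
  have hcond : μ[fun ω => (a ω : ℂ) + d ω * Complex.I | m]
      =ᵐ[μ] fun ω => (a ω : ℂ) + μ[d | m] ω * Complex.I := by
    filter_upwards [condExp_add (f := T ∘ a) (g := U ∘ d) (T.integrable_comp hai)
      (U.integrable_comp hd) m, U.comp_condExp_comm hd (m := m)] with ω h hU
    rw [hf, h, Pi.add_apply, condExp_of_stronglyMeasurable (f := T ∘ a) hm
      (T.continuous.comp_stronglyMeasurable ha) (T.integrable_comp hai), ← hU]
    simp [T, U, mul_comm]
  calc ∫ ω, √(a ω ^ 2 + μ[d | m] ω ^ 2) ∂μ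
      = ∫ ω, ‖μ[fun ω => (a ω : ℂ) + d ω * Complex.I | m] ω‖ ∂μ :=
        integral_congr_ae (hcond.mono fun ω h => by dsimp only; rw [h, norm_eq])
    _ ≤ ∫ ω, ‖(a ω : ℂ) + d ω * Complex.I‖ ∂μ := integral_norm_condExp_le _
    _ = ∫ ω, √(a ω ^ 2 + d ω ^ 2) ∂μ := by simp only [norm_eq]

theorem MeasureTheory.Integrable.sqrt_add {a b : Ω → ℝ} (ha : 0 ≤ a) (hb : 0 ≤ b)
    (hia : Integrable (fun ω => √(a ω)) μ) (hib : Integrable (fun ω => √(b ω)) μ) :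
    Integrable (fun ω => √(a ω + b ω)) μ := by
  have hsq : (fun ω => √(a ω + b ω)) = fun ω => √(√(a ω) ^ 2 + √(b ω) ^ 2) := by
    ext ω; rw [Real.sq_sqrt (ha ω), Real.sq_sqrt (hb ω)]
  refine (hia.add hib).mono' ?_ (.of_forall fun ω => ?_)
  · rw [hsq]
    exact Real.continuous_sqrt.comp_aestronglyMeasurable ((hia.1.pow 2).add (hib.1.pow 2))
  · rw [Real.norm_of_nonneg (Real.sqrt_nonneg _)]
    have := Real.sqrt_add_sub_sqrt_le_of_le le_rfl (ha ω) (hb ω)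
    simp only [zero_add, Real.sqrt_zero, sub_zero] at this
    simp only [Pi.add_apply]
    linarith

def sumSq (h : ℕ → Ω → ℝ) (k : ℕ) (ω : Ω) : ℝ :=
  ∑ j ∈ Finset.Icc 1 k, h j ω ^ 2

@[simp]
theorem sumSq_zero (h : ℕ → Ω → ℝ) : sumSq h 0 = 0 := by
  ext ω; simp [sumSq]

theorem sumSq_succ (h : ℕ → Ω → ℝ) (k : ℕ) (ω : Ω) :
    sumSq h (k + 1) ω = sumSq h k ω + h (k + 1) ω ^ 2 := by
  rw [sumSq, sumSq, Finset.sum_Icc_succ_top (by omega)]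

theorem sumSq_nonneg (h : ℕ → Ω → ℝ) (k : ℕ) : 0 ≤ sumSq h k :=
  fun _ => Finset.sum_nonneg fun _ _ => sq_nonneg _

theorem integrable_sqrt_sumSq {h : ℕ → Ω → ℝ} (hh : ∀ k, Integrable (h k) μ) (k : ℕ) :
    Integrable (fun ω => √(sumSq h k ω)) μ := by
  induction k with
  | zero => simp
  | succ k ih =>
    simp_rw [sumSq_succ]
    refine ih.sqrt_add (sumSq_nonneg h k) (fun _ => sq_nonneg _) ?_
    simpa only [Real.sqrt_sq_eq_abs] using (hh (k + 1)).abs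

theorem MeasureTheory.Adapted.measurable_sumSq {ℱ : Filtration ℕ m0} {h : ℕ → Ω → ℝ}
    (hh : Adapted ℱ h) (k : ℕ) : Measurable[ℱ k] (sumSq h k) :=
  Finset.measurable_sum _ fun j hj =>
    ((hh j).mono (ℱ.mono (Finset.mem_Icc.mp hj).2) le_rfl).pow_const 2

noncomputable def previsibleProjection (μ : Measure Ω) (ℱ : Filtration ℕ m0) (d : ℕ → Ω → ℝ)
    (k : ℕ) : Ω → ℝ :=
  μ[d k | ℱ (k - 1)]

section Potential

variable {ℱ : Filtration ℕ m0} [SigmaFiniteFiltration μ ℱ] {d : ℕ → Ω → ℝ}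

theorem integral_sqrt_sumSq_add_sumSq_succ_le (hd : Adapted ℱ d)
    (hdi : ∀ k, Integrable (d k) μ) (k : ℕ) :
    ∫ ω, √(sumSq (previsibleProjection μ ℱ d) (k + 1) ω + sumSq d (k + 1) ω) ∂μ
        + 2 * ∫ ω, √(sumSq d k ω) ∂μ
      ≤ ∫ ω, √(sumSq (previsibleProjection μ ℱ d) k ω + sumSq d k ω) ∂μ
        + 2 * ∫ ω, √(sumSq d (k + 1) ω) ∂μ := by
  set g := previsibleProjection μ ℱ d
  have hgi : ∀ k, Integrable (g k) μ := fun _ => integrable_condExp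
  have hΦ : ∀ k, Integrable (fun ω => √(sumSq g k ω + sumSq d k ω)) μ := fun k =>
    (integrable_sqrt_sumSq hgi k).sqrt_add (sumSq_nonneg g k) (sumSq_nonneg d k)
      (integrable_sqrt_sumSq hdi k)
  have hψ := integrable_sqrt_sumSq hdi
  have hχ : Integrable (fun ω => √(sumSq d k ω + g (k + 1) ω ^ 2)) μ :=
    (hψ k).sqrt_add (sumSq_nonneg d k) (fun _ => sq_nonneg _)
      (by simpa only [Real.sqrt_sq_eq_abs] using (hgi (k + 1)).abs)
  have pointwise : ∀ ω, √(sumSq g (k + 1) ω + sumSq d (k + 1) ω) + 2 * √(sumSq d k ω)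
      ≤ √(sumSq g k ω + sumSq d k ω) + √(sumSq d (k + 1) ω)
        + √(sumSq d k ω + g (k + 1) ω ^ 2) := by
    intro ω
    have h := Real.sqrt_add_add_add_two_mul_sqrt_le (sumSq_nonneg d k ω)
      (le_add_of_nonneg_left (sumSq_nonneg g k ω)) (sq_nonneg (g (k + 1) ω))
      (sq_nonneg (d (k + 1) ω))
    rw [sumSq_succ, sumSq_succ, show ∀ a b c e : ℝ, a + b + (c + e) = a + c + b + e by
      intros; ring]
    linarith
  have jensen : ∫ ω, √(sumSq d k ω + g (k + 1) ω ^ 2) ∂μ ≤ ∫ ω, √(sumSq d (k + 1) ω) ∂μ := by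
    have h := integral_sqrt_sq_add_sq_condExp_le (ℱ.le k)
      (hd.measurable_sumSq k).sqrt.stronglyMeasurable (hψ k) (hdi (k + 1))
    simp only [Real.sq_sqrt (sumSq_nonneg d k _), ← sumSq_succ] at h
    exact h
  calc ∫ ω, √(sumSq g (k + 1) ω + sumSq d (k + 1) ω) ∂μ + 2 * ∫ ω, √(sumSq d k ω) ∂μ
      = ∫ ω, (√(sumSq g (k + 1) ω + sumSq d (k + 1) ω) + 2 * √(sumSq d k ω)) ∂μ := by
        rw [integral_add (hΦ (k + 1)) ((hψ k).const_mul 2), integral_const_mul]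
    _ ≤ ∫ ω, (√(sumSq g k ω + sumSq d k ω) + √(sumSq d (k + 1) ω)
          + √(sumSq d k ω + g (k + 1) ω ^ 2)) ∂μ :=
        integral_mono ((hΦ (k + 1)).add ((hψ k).const_mul 2))
          (((hΦ k).add (hψ (k + 1))).add hχ) pointwise
    _ = ∫ ω, √(sumSq g k ω + sumSq d k ω) ∂μ + ∫ ω, √(sumSq d (k + 1) ω) ∂μ
          + ∫ ω, √(sumSq d k ω + g (k + 1) ω ^ 2) ∂μ := by
        rw [integral_add ?_ hχ, integral_add (hΦ k) (hψ (k + 1))]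
        exact (hΦ k).add (hψ (k + 1))
    _ ≤ _ := by linarith

theorem integral_sqrt_sumSq_previsibleProjection_le (hd : Adapted ℱ d)
    (hdi : ∀ k, Integrable (d k) μ) (n : ℕ) :
    ∫ ω, √(sumSq (previsibleProjection μ ℱ d) n ω) ∂μ ≤ 2 * ∫ ω, √(sumSq d n ω) ∂μ := by
  set g := previsibleProjection μ ℱ d
  have potential_antitone : Antitone fun k =>
      ∫ ω, √(sumSq g k ω + sumSq d k ω) ∂μ - 2 * ∫ ω, √(sumSq d k ω) ∂μ :=
    antitone_nat_of_succ_le fun k => by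
      linarith [integral_sqrt_sumSq_add_sumSq_succ_le hd hdi k]
  have hgi : Integrable (fun ω => √(sumSq g n ω)) μ :=
    integrable_sqrt_sumSq (fun _ => integrable_condExp) n
  calc ∫ ω, √(sumSq g n ω) ∂μ ≤ ∫ ω, √(sumSq g n ω + sumSq d n ω) ∂μ :=
        integral_mono hgi (hgi.sqrt_add (sumSq_nonneg g n) (sumSq_nonneg d n)
          (integrable_sqrt_sumSq hdi n))
          fun ω => Real.sqrt_le_sqrt (le_add_of_nonneg_right (sumSq_nonneg d n ω))
    _ ≤ 2 * ∫ ω, √(sumSq d n ω) ∂μ := by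
        simpa [sub_nonpos] using potential_antitone (Nat.zero_le n)

end Potential

end

theorem stmt_9_general {Ω : Type*} {m0 : MeasurableSpace Ω} (μ : Measure Ω) [IsProbabilityMeasure μ]
    (ℱ : ℕ → MeasurableSpace Ω) (hle : ∀ k, ℱ k ≤ m0) (hmono : Monotone ℱ)
    (n : ℕ) (F : ℕ → Ω → ℂ)
    (hadapted : ∀ k, StronglyMeasurable[ℱ k] (F k))
    (hint : ∀ k, Integrable (F k) μ) :
    (∫ ω, Real.sqrt (∑ k ∈ Finset.Icc 1 n,
        (μ[fun x => ‖F k x - F (k - 1) x‖ | ℱ (k - 1)]) ω ^ 2) ∂μ)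
      ≤ 2 * ∫ ω, Real.sqrt (∑ k ∈ Finset.Icc 1 n,
          ‖F k ω - F (k - 1) ω‖ ^ 2) ∂μ := by
  let 𝒢 : Filtration ℕ m0 := ⟨ℱ, hmono, hle⟩
  have hd : Adapted 𝒢 fun k ω => ‖F k ω - F (k - 1) ω‖ := fun k =>
    ((hadapted k).sub ((hadapted (k - 1)).mono (hmono (Nat.sub_le k 1)))).norm.measurable
  exact integral_sqrt_sumSq_previsibleProjection_le hd
    (fun k => ((hint k).sub (hint (k - 1))).norm) n

theorem stmt_9 {Ω : Type*} {m0 : MeasurableSpace Ω} (μ : Measure Ω) [IsProbabilityMeasure μ]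
    (ℱ : ℕ → MeasurableSpace Ω) (hle : ∀ k, ℱ k ≤ m0) (hmono : Monotone ℱ)
    (n : ℕ) (F : ℕ → Ω → ℂ)
    (hadapted : ∀ k, StronglyMeasurable[ℱ k] (F k))
    (hint : ∀ k, Integrable (F k) μ)
    (hmart : ∀ k, μ[F (k + 1) | ℱ k] =ᵐ[μ] F k) :
    (∫ ω, Real.sqrt (∑ k ∈ Finset.Icc 1 n,
        (μ[fun x => ‖F k x - F (k - 1) x‖ | ℱ (k - 1)]) ω ^ 2) ∂μ)
      ≤ 2 * ∫ ω, Real.sqrt (∑ k ∈ Finset.Icc 1 n,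
          ‖F k ω - F (k - 1) ω‖ ^ 2) ∂μ :=
  stmt_9_general μ ℱ hle hmono n F hadapted hint
end

section
/- Let X be an integrable complex random variable on a probability space with E[X] = 0, let 𝒢 be a sub-σ-algebra, X₀ = E[X | 𝒢], X₁ = X − X₀, and let A ∈ 𝒢 be a set on which |X₀| ≥ 2 almost surely (and X₁ is supported on A). Then E[(1 + |X|²)^{1/2}] ≥ (1 + (1/12) E[|X₀|²])^{1/2} + (1/4) E[|X₁|], provided additionally that |X₀| ≤ 2 a.s. and |X| ≤ 2 on the complement of A. -/
/-!
Write `a = P(A)`, `I = E[1_A |X|]` and `S = E[1_{Aᶜ} |X|²]`. On `A`, the bound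
`√(1 + u²) ≥ 1/2 + 5u/6` gives `E[1_A √(1 + |X|²)] ≥ a/2 + 5I/6`. Off `A` we have `X = X₀` and
`|X| ≤ 2`, so `√(1 + u²) ≥ 1 + u²/4` (valid for `u² ≤ 8`) gives
`E[1_{Aᶜ} √(1 + |X|²)] ≥ 1 - a + S/4`, while `E|X₀|² ≤ 4a + S`. Conditional Jensen on `A ∈ 𝒢`
gives `I ≥ E[1_A |X₀|] ≥ 2a`, and `E|X₁| ≤ E[1_A (|X| + |X₀|)] ≤ 2I`. With
`√(1 + t) ≤ 1 + t/2` the claim reduces to `2a ≤ I`.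
-/

open MeasureTheory

lemma le_sqrt_one_add_sq_of_nonneg {u : ℝ} (hu : 0 ≤ u) :
    1 / 2 + 5 / 6 * u ≤ √(1 + u ^ 2) :=
  (Real.le_sqrt (by positivity) (by positivity)).2 (by nlinarith [sq_nonneg (u - 15 / 11)])

lemma one_add_sq_div_four_le_sqrt_one_add_sq {u : ℝ} (hu : u ^ 2 ≤ 8) :
    1 + u ^ 2 / 4 ≤ √(1 + u ^ 2) :=
  (Real.le_sqrt (by positivity) (by positivity)).2 (by nlinarith [sq_nonneg u])

namespace MeasureTheory

variable {Ω : Type*} {m0 : MeasurableSpace Ω} {μ : Measure Ω}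

section FiniteMeasure

variable [IsFiniteMeasure μ] {s : Set Ω}

lemma const_mul_measureReal_add_mul_setIntegral_le {f g : Ω → ℝ} {c d : ℝ}
    (hf : IntegrableOn f s μ) (hg : IntegrableOn g s μ)
    (h : ∀ᵐ ω ∂μ.restrict s, c + d * f ω ≤ g ω) :
    c * μ.real s + d * ∫ ω in s, f ω ∂μ ≤ ∫ ω in s, g ω ∂μ := by
  calc c * μ.real s + d * ∫ ω in s, f ω ∂μ = ∫ ω in s, (c + d * f ω) ∂μ := by
        rw [integral_add (integrable_const c) (hf.const_mul d), setIntegral_const,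
          integral_const_mul, smul_eq_mul, mul_comm]
    _ ≤ ∫ ω in s, g ω ∂μ := integral_mono_ae ((integrable_const c).add (hf.const_mul d)) hg h

variable {E : Type*} [NormedAddCommGroup E] {X : Ω → E}

lemma Integrable.sqrt_one_add_sq_norm (hX : Integrable X μ) :
    Integrable (fun ω => √(1 + ‖X ω‖ ^ 2)) μ := by
  refine ((integrable_const 1).add hX.norm).mono' (by fun_prop) (ae_of_all _ fun ω => ?_)
  rw [Real.norm_of_nonneg (Real.sqrt_nonneg _)]
  exact sqrt_one_add_norm_sq_le (X ω)

lemma half_measureReal_add_le_setIntegral_sqrt_one_add_sq_norm (hX : Integrable X μ) :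
    1 / 2 * μ.real s + 5 / 6 * ∫ ω in s, ‖X ω‖ ∂μ ≤ ∫ ω in s, √(1 + ‖X ω‖ ^ 2) ∂μ :=
  const_mul_measureReal_add_mul_setIntegral_le hX.norm.integrableOn
    hX.sqrt_one_add_sq_norm.integrableOn
    (ae_of_all _ fun _ => le_sqrt_one_add_sq_of_nonneg (norm_nonneg _))

lemma measureReal_add_le_setIntegral_sqrt_one_add_sq_norm (hX : Integrable X μ)
    (hbd : ∀ᵐ ω ∂μ.restrict s, ‖X ω‖ ^ 2 ≤ 8) :
    μ.real s + 1 / 4 * ∫ ω in s, ‖X ω‖ ^ 2 ∂μ ≤ ∫ ω in s, √(1 + ‖X ω‖ ^ 2) ∂μ := by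
  have hsq : IntegrableOn (fun ω => ‖X ω‖ ^ 2) s μ :=
    Integrable.of_bound (hX.1.restrict.norm.pow 2) 8 (hbd.mono fun _ h => by
      rwa [Real.norm_of_nonneg (by positivity)])
  simpa only [one_mul] using const_mul_measureReal_add_mul_setIntegral_le (c := 1) (d := 1 / 4)
    hsq hX.sqrt_one_add_sq_norm.integrableOn (hbd.mono fun _ h => by
      linarith [one_add_sq_div_four_le_sqrt_one_add_sq h])

lemma integral_norm_sq_le_of_ae_eq_compl {Y : Ω → E} {c : ℝ} (hs : MeasurableSet s)
    (hY : AEStronglyMeasurable Y μ) (hbd : ∀ᵐ ω ∂μ, ‖Y ω‖ ≤ c)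
    (heq : ∀ᵐ ω ∂μ, ω ∉ s → Y ω = X ω) :
    ∫ ω, ‖Y ω‖ ^ 2 ∂μ ≤ c ^ 2 * μ.real s + ∫ ω in sᶜ, ‖X ω‖ ^ 2 ∂μ := by
  have hbd_sq : ∀ᵐ ω ∂μ, ‖Y ω‖ ^ 2 ≤ c ^ 2 :=
    hbd.mono fun _ h => pow_le_pow_left₀ (norm_nonneg _) h 2
  have hsq : Integrable (fun ω => ‖Y ω‖ ^ 2) μ :=
    Integrable.of_bound (hY.norm.pow 2) (c ^ 2) (hbd_sq.mono fun _ h => by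
      rwa [Real.norm_of_nonneg (by positivity)])
  rw [← integral_add_compl hs hsq, setIntegral_congr_ae hs.compl (heq.mono fun ω h hω => by
    rw [h hω])]
  gcongr
  calc ∫ ω in s, ‖Y ω‖ ^ 2 ∂μ ≤ ∫ _ in s, c ^ 2 ∂μ :=
        integral_mono_ae hsq.integrableOn (integrable_const _) (ae_restrict_of_ae hbd_sq)
    _ = c ^ 2 * μ.real s := by rw [setIntegral_const, smul_eq_mul, mul_comm]

end FiniteMeasure

section CondExp

variable {E : Type*} [NormedAddCommGroup E] [NormedSpace ℝ E] [CompleteSpace E]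
  {𝒢 : MeasurableSpace Ω} {X : Ω → E} {A : Set Ω}

lemma mul_measureReal_le_setIntegral_norm_of_le_norm_condExp [IsFiniteMeasure μ] {c : ℝ}
    (h𝒢 : 𝒢 ≤ m0) (hA : MeasurableSet[𝒢] A) (hc : ∀ᵐ ω ∂μ, ω ∈ A → c ≤ ‖μ[X | 𝒢] ω‖) :
    c * μ.real A ≤ ∫ ω in A, ‖X ω‖ ∂μ :=
  calc c * μ.real A = ∫ _ in A, c ∂μ := by rw [setIntegral_const, smul_eq_mul, mul_comm]
    _ ≤ ∫ ω in A, ‖μ[X | 𝒢] ω‖ ∂μ :=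
        integral_mono_ae (integrable_const c) integrable_condExp.norm.integrableOn
          ((ae_restrict_iff' (h𝒢 _ hA)).2 hc)
    _ ≤ ∫ ω in A, ‖X ω‖ ∂μ := setIntegral_norm_condExp_le hA X

lemma integral_norm_sub_condExp_le (hA : MeasurableSet[𝒢] A) (hX : Integrable X μ)
    (hsupp : ∀ᵐ ω ∂μ, ω ∉ A → X ω - μ[X | 𝒢] ω = 0) :
    ∫ ω, ‖X ω - μ[X | 𝒢] ω‖ ∂μ ≤ 2 * ∫ ω in A, ‖X ω‖ ∂μ := by
  have hX₀ : Integrable (fun ω => ‖μ[X | 𝒢] ω‖) μ := integrable_condExp.norm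
  calc ∫ ω, ‖X ω - μ[X | 𝒢] ω‖ ∂μ = ∫ ω in A, ‖X ω - μ[X | 𝒢] ω‖ ∂μ :=
        (setIntegral_eq_integral_of_ae_compl_eq_zero
          (hsupp.mono fun ω h hω => by rw [h hω, norm_zero])).symm
    _ ≤ ∫ ω in A, (‖X ω‖ + ‖μ[X | 𝒢] ω‖) ∂μ :=
        integral_mono (hX.sub integrable_condExp).norm.integrableOn
          (hX.norm.add hX₀).integrableOn fun ω => norm_sub_le _ _
    _ = ∫ ω in A, ‖X ω‖ ∂μ + ∫ ω in A, ‖μ[X | 𝒢] ω‖ ∂μ :=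
        integral_add hX.norm.integrableOn hX₀.integrableOn
    _ ≤ 2 * ∫ ω in A, ‖X ω‖ ∂μ := by linarith [setIntegral_norm_condExp_le (μ := μ) hA X]

end CondExp

end MeasureTheory

theorem stmt_17_general {Ω : Type*} {m0 : MeasurableSpace Ω} (μ : Measure Ω) [IsProbabilityMeasure μ]
    (𝒢 : MeasurableSpace Ω) (h𝒢 : 𝒢 ≤ m0)
    (X : Ω → ℂ) (hX : Integrable X μ)
    (X₀ X₁ : Ω → ℂ) (hX₀ : X₀ = μ[X | 𝒢]) (hX₁ : ∀ ω, X₁ ω = X ω - X₀ ω)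
    (A : Set Ω) (hA : MeasurableSet[𝒢] A)
    (hAX₀ : ∀ᵐ ω ∂μ, ω ∈ A → 2 ≤ ‖X₀ ω‖)
    (hsupp : ∀ᵐ ω ∂μ, ω ∉ A → X₁ ω = 0)
    (hX₀bd : ∀ᵐ ω ∂μ, ‖X₀ ω‖ ≤ 2)
    (hXbd : ∀ᵐ ω ∂μ, ω ∉ A → ‖X ω‖ ≤ 2) :
    Real.sqrt (1 + (1 / 12) * ∫ ω, ‖X₀ ω‖ ^ 2 ∂μ)
        + (1 / 4) * ∫ ω, ‖X₁ ω‖ ∂μ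
      ≤ ∫ ω, Real.sqrt (1 + ‖X ω‖ ^ 2) ∂μ := by
  simp only [hX₁] at hsupp ⊢
  subst hX₀
  have hA' : MeasurableSet[m0] A := h𝒢 _ hA
  have hI := mul_measureReal_le_setIntegral_norm_of_le_norm_condExp h𝒢 hA hAX₀
  have hX₁_norm := integral_norm_sub_condExp_le hA hX hsupp
  have hX₀_sq := integral_norm_sq_le_of_ae_eq_compl (Y := μ[X | 𝒢]) hA' integrable_condExp.1 hX₀bd
    (hsupp.mono fun ω h hω => (sub_eq_zero.1 (h hω)).symm)
  have hthick := half_measureReal_add_le_setIntegral_sqrt_one_add_sq_norm (s := A) hX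
  have hthin := measureReal_add_le_setIntegral_sqrt_one_add_sq_norm (s := Aᶜ) hX
    ((ae_restrict_iff' hA'.compl).2 (hXbd.mono fun ω h hω => by
      nlinarith [h hω, norm_nonneg (X ω)]))
  have hT : 0 ≤ ∫ ω, ‖μ[X | 𝒢] ω‖ ^ 2 ∂μ := integral_nonneg fun _ => sq_nonneg _
  have hS : 0 ≤ ∫ ω in Aᶜ, ‖X ω‖ ^ 2 ∂μ := integral_nonneg fun _ => sq_nonneg _
  have hsqrt := Real.sqrt_one_add_le (x := 1 / 12 * ∫ ω, ‖μ[X | 𝒢] ω‖ ^ 2 ∂μ) (by linarith)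
  rw [probReal_compl_eq_one_sub hA'] at hthin
  rw [← integral_add_compl hA' hX.sqrt_one_add_sq_norm]
  linarith

theorem stmt_17 {Ω : Type*} {m0 : MeasurableSpace Ω} (μ : Measure Ω) [IsProbabilityMeasure μ]
    (𝒢 : MeasurableSpace Ω) (h𝒢 : 𝒢 ≤ m0)
    (X : Ω → ℂ) (hX : Integrable X μ) (hmean : ∫ ω, X ω ∂μ = 0)
    (X₀ X₁ : Ω → ℂ) (hX₀ : X₀ = μ[X | 𝒢]) (hX₁ : ∀ ω, X₁ ω = X ω - X₀ ω)
    (A : Set Ω) (hA : MeasurableSet[𝒢] A)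
    (hAX₀ : ∀ᵐ ω ∂μ, ω ∈ A → 2 ≤ ‖X₀ ω‖)
    (hsupp : ∀ᵐ ω ∂μ, ω ∉ A → X₁ ω = 0)
    (hX₀bd : ∀ᵐ ω ∂μ, ‖X₀ ω‖ ≤ 2)
    (hXbd : ∀ᵐ ω ∂μ, ω ∉ A → ‖X ω‖ ≤ 2) :
    Real.sqrt (1 + (1 / 12) * ∫ ω, ‖X₀ ω‖ ^ 2 ∂μ)
        + (1 / 4) * ∫ ω, ‖X₁ ω‖ ∂μ
      ≤ ∫ ω, Real.sqrt (1 + ‖X ω‖ ^ 2) ∂μ :=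
  stmt_17_general μ 𝒢 h𝒢 X hX X₀ X₁ hX₀ hX₁ A hA hAX₀ hsupp hX₀bd hXbd
end
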